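/- Let a, b, e, f be rational numbers with a ≠ 0, N = N(a,b,e,f), and let A be a lower unitriangular 4×4 rational matrix with AᵀJA = J; write A·N·A⁻¹ = N(a, b, e', f') (with e', f' rational). Let π ∈ ℂ and v = (1, 0, f/(2a), π)ᵀ. Then, setting c = −A₂₁/a ∈ ℚ, the vector w = exp(c·A N A⁻¹)·A·v has the form w = (1, 0, f'/(2a), π + λ)ᵀ for some rational number λ. (Thus the extension-class parameter π of the normalized limit Hodge filtration changes only by a rational number under integral renormalization.) -/

import Mathlib

open Matrix

/-- The symplectic form matrix `J`. -/
def Jmat (R : Type*) [Zero R] [One R] [Neg R] : Matrix (Fin 4) (Fin 4) R :=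
  !![0, 0, 0, 1;
     0, 0, 1, 0;
     0, -1, 0, 0;
     -1, 0, 0, 0]

/-- The normalized nilpotent matrix `N(a,b,e,f)`. -/
def Nmat {R : Type*} [Zero R] [Neg R] (a b e f : R) : Matrix (Fin 4) (Fin 4) R :=
  !![0, 0, 0, 0;
     a, 0, 0, 0;
     e, b, 0, 0;
     f, e, -a, 0]

/-!
The symplectic condition forces a lower unitriangular `A` to have `A₄₃ = -A₂₁` and
`A₃₁ = A₄₂ + A₂₁A₃₂`; comparing the first columns of `AN = N'A` then gives
`e' = e + aA₃₂ - bA₂₁` and `f' = f + 2aA₄₂ - 2eA₂₁ + bA₂₁²`.  Since `N'⁴ = 0`, the exponential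
`exp(cN')` is the cubic polynomial `1 + cN' + c²N'²/2 + c³N'³/6`, whose entries are explicit.
The choice `c = -A₂₁/a` cancels the second coordinate of `Av`, the third coordinate becomes
`f'/(2a)`, and because `A` and `exp(cN')` both fix the last basis vector, `π` is only shifted
by a rational number.
-/

theorem NormedSpace.exp_eq_sum_range_of_pow_eq_zero (𝕂 : Type*) {𝔸 : Type*} [Field 𝕂]
    [CharZero 𝕂] [Ring 𝔸] [Algebra 𝕂 𝔸] [TopologicalSpace 𝔸] [IsTopologicalRing 𝔸]
    {x : 𝔸} {k : ℕ} (hx : x ^ k = 0) :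
    NormedSpace.exp x = ∑ i ∈ Finset.range k, (i.factorial⁻¹ : 𝕂) • x ^ i := by
  rw [NormedSpace.exp_eq_tsum 𝕂]
  refine tsum_eq_sum fun i hi => ?_
  rw [pow_eq_zero_of_le (by simpa using hi) hx, smul_zero]

theorem Matrix.exists_eq_of_lowerUnitriangular_fin_four {R : Type*} [Zero R] [One R]
    {A : Matrix (Fin 4) (Fin 4) R} (hlow : ∀ i j : Fin 4, i < j → A i j = 0)
    (hdiag : ∀ i : Fin 4, A i i = 1) :
    ∃ x y z t u s : R, A = !![1, 0, 0, 0; x, 1, 0, 0; y, z, 1, 0; t, u, s, 1] :=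
  ⟨A 1 0, A 2 0, A 2 1, A 3 0, A 3 1, A 3 2, by
    ext i j
    fin_cases i <;> fin_cases j <;> simp [hdiag, hlow]⟩

section Nmat

variable {R : Type*} [CommRing R] (a b e f : R)

theorem Nmat_sq :
    Nmat a b e f ^ 2 = !![0, 0, 0, 0; 0, 0, 0, 0; a * b, 0, 0, 0; 0, -(a * b), 0, 0] := by
  ext i j
  fin_cases i <;> fin_cases j <;> simp [sq, Nmat, Matrix.mul_apply, Fin.sum_univ_four, mul_comm]

theorem Nmat_pow_three :
    Nmat a b e f ^ 3 = !![0, 0, 0, 0; 0, 0, 0, 0; 0, 0, 0, 0; -(a ^ 2 * b), 0, 0, 0] := by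
  rw [pow_succ, Nmat_sq]
  ext i j
  fin_cases i <;> fin_cases j <;>
    simp [Nmat, Matrix.mul_apply, Fin.sum_univ_four, sq, mul_right_comm a b]

theorem Nmat_pow_four : Nmat a b e f ^ 4 = 0 := by
  rw [pow_succ, Nmat_pow_three]
  ext i j
  fin_cases i <;> fin_cases j <;> simp [Nmat, Matrix.mul_apply, Fin.sum_univ_four]

theorem Nmat_map {S : Type*} [CommRing S] (φ : R →+* S) :
    (Nmat a b e f).map φ = Nmat (φ a) (φ b) (φ e) (φ f) := by
  ext i j
  fin_cases i <;> fin_cases j <;> simp [Nmat]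

end Nmat

theorem exp_smul_Nmat {K : Type*} [Field K] [CharZero K] [TopologicalSpace K]
    [IsTopologicalRing K] (c a b e f : K) :
    NormedSpace.exp (c • Nmat a b e f) =
      !![1, 0, 0, 0;
         c * a, 1, 0, 0;
         c * e + c ^ 2 * a * b / 2, c * b, 1, 0;
         c * f - c ^ 3 * a ^ 2 * b / 6, c * e - c ^ 2 * a * b / 2, -(c * a), 1] := by
  rw [NormedSpace.exp_eq_sum_range_of_pow_eq_zero K (k := 4)
    (by rw [smul_pow, Nmat_pow_four, smul_zero])]
  simp only [Finset.sum_range_succ, Finset.sum_range_zero, smul_pow, Nmat_sq, Nmat_pow_three]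
  ext i j
  fin_cases i <;> fin_cases j <;> simp [Nmat, Nat.factorial] <;> ring

section LowerUnitriangular

variable {R : Type*} [CommRing R] {x z t u : R}

theorem entries_of_lowerUnitriangular_symplectic {y s : R}
    (h : (!![1, 0, 0, 0; x, 1, 0, 0; y, z, 1, 0; t, u, s, 1])ᵀ * Jmat R *
      !![1, 0, 0, 0; x, 1, 0, 0; y, z, 1, 0; t, u, s, 1] = Jmat R) :
    s = -x ∧ y = u + x * z := by
  have h02 := congrFun (congrFun h 0) 2
  have h01 := congrFun (congrFun h 0) 1
  simp [Jmat, Matrix.mul_apply, Fin.sum_univ_four] at h01 h02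
  constructor
  · linear_combination h02
  · linear_combination -h01

theorem Nmat_params_of_lowerUnitriangular_symplectic_conj {a b e f e' f' : R}
    (h : !![1, 0, 0, 0; x, 1, 0, 0; u + x * z, z, 1, 0; t, u, -x, 1] * Nmat a b e f =
      Nmat a b e' f' * !![1, 0, 0, 0; x, 1, 0, 0; u + x * z, z, 1, 0; t, u, -x, 1]) :
    e' = e + a * z - b * x ∧ f' = f + 2 * a * u - 2 * e * x + b * x ^ 2 := by
  have h20 := congrFun (congrFun h 2) 0
  have h30 := congrFun (congrFun h 3) 0
  simp [Nmat, Matrix.mul_apply, Fin.sum_univ_four] at h20 h30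
  have he' : e' = e + a * z - b * x := by linear_combination -h20
  exact ⟨he', by linear_combination -h30 - x * he'⟩

end LowerUnitriangular

/-- under integral renormalization by a lower unitriangular
symplectic `A` (with `A·N·A⁻¹ = N(a,b,e',f')`), the normalized limit Hodge
filtration vector `v = (1, 0, f/(2a), π)ᵀ` is transformed, after retwisting by
`exp(c·ANA⁻¹)` with `c = −A₂₁/a`, into `(1, 0, f'/(2a), π + λ)ᵀ` for some
rational `λ`. -/
theorem stmt10 (a b e f e' f' : ℚ) (ha : a ≠ 0)
    (A : Matrix (Fin 4) (Fin 4) ℚ)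
    (hlow : ∀ i j : Fin 4, i < j → A i j = 0)
    (hdiag : ∀ i : Fin 4, A i i = 1)
    (hsymp : Aᵀ * Jmat ℚ * A = Jmat ℚ)
    (hconj : A * Nmat a b e f * A⁻¹ = Nmat a b e' f')
    (π : ℂ) :
    let c : ℚ := -(A 1 0) / a
    let v : Fin 4 → ℂ := ![1, 0, ((f / (2 * a) : ℚ) : ℂ), π]
    let w : Fin 4 → ℂ :=
      (NormedSpace.exp ((c : ℂ) •
        ((A * Nmat a b e f * A⁻¹).map ((↑) : ℚ → ℂ)))).mulVec
        ((A.map ((↑) : ℚ → ℂ)).mulVec v)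
    ∃ lam : ℚ, w = ![1, 0, ((f' / (2 * a) : ℚ) : ℂ), π + (lam : ℂ)] := by
  intro c v w
  have hdet : A.det = 1 := by
    rw [Matrix.det_of_isLowerTriangular A fun i j hij => hlow i j hij]
    simp [hdiag]
  have hAN : A * Nmat a b e f = Nmat a b e' f' * A := by
    rw [← hconj, Matrix.nonsing_inv_mul_cancel_right _ _ (by simp [hdet])]
  obtain ⟨x, y, z, t, u, s, rfl⟩ := Matrix.exists_eq_of_lowerUnitriangular_fin_four hlow hdiag
  obtain ⟨rfl, rfl⟩ := entries_of_lowerUnitriangular_symplectic hsymp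
  obtain ⟨rfl, rfl⟩ := Nmat_params_of_lowerUnitriangular_symplectic_conj hAN
  refine ⟨t - x * f / a - x * u + x ^ 2 * e / a - b * x ^ 3 / (3 * a), ?_⟩
  have haC : (a : ℂ) ≠ 0 := by exact_mod_cast ha
  simp only [w, c, v, hconj, ← Rat.coe_castHom, Nmat_map, exp_smul_Nmat]
  ext i
  fin_cases i <;> simp [Matrix.mulVec, dotProduct, Fin.sum_univ_four] <;> field_simp <;> ring
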